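/- arXiv:1503.02423 — 8 statements merged into one kernel-verified Lean document; each statement's English description precedes it below -/
import Mathlib

section
/- Suppose κ ≤ μ₁ and χ = χ₁⁺ is a successor cardinal with μ₁ = min{μ, χ₁} ≥ κ, and there is a κ-family A ⊆ [χ]^μ of cardinality χ⁺. Then there is a κ-family A' ⊆ [χ₁]^{μ₁} of cardinality χ₁⁺. -/
open Cardinal

universe u

/-- A κ-family: any two distinct members intersect in a set of cardinality < κ. -/
def KappaFamily {α : Type u} (κ : Cardinal) (𝒜 : Set (Set α)) : Prop :=
  ∀ A ∈ 𝒜, ∀ B ∈ 𝒜, A ≠ B → #(↥(A ∩ B)) < κ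

open Set

/-!
Shrink every member to size `μ₁ = min μ χ₁`; since `μ₁ ≥ κ`, distinct members stay distinct.
Identify `α` with the ordinal `χ = χ₁⁺`. As `χ` is regular and `μ₁ < χ`, every member is bounded
in `χ`, and since there are only `χ` bounds for `χ⁺` members, `χ₁⁺` of them lie below one
`t < χ`. The initial segment below `t` has size at most `χ₁`, so it embeds into a set of size `χ₁`.
-/

section KappaFamily

variable {α β : Type u} {κ ν : Cardinal.{u}} {𝒜 : Set (Set α)}

theorem KappaFamily.mono {ℬ : Set (Set α)} (h : KappaFamily κ 𝒜) (hℬ : ℬ ⊆ 𝒜) :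
    KappaFamily κ ℬ :=
  fun A hA B hB => h A (hℬ hA) B (hℬ hB)

theorem KappaFamily.exists_shrink (h : KappaFamily κ 𝒜) (hκν : κ ≤ ν)
    (hν : ∀ A ∈ 𝒜, ν ≤ #A) :
    ∃ 𝒜' : Set (Set α), (∀ A ∈ 𝒜', #A = ν) ∧ KappaFamily κ 𝒜' ∧ #𝒜' = #𝒜 := by
  choose S hSA hS using fun A : 𝒜 => le_mk_iff_exists_subset.1 (hν A A.2)
  have hsub (A B : 𝒜) : S A ∩ S B ⊆ (A : Set α) ∩ B := inter_subset_inter (hSA A) (hSA B)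
  have hS_inj : Function.Injective S := by
    intro A B hAB
    by_contra hne
    have hν_le : ν ≤ #(↥((A : Set α) ∩ B)) := by
      rw [← hS A, ← inter_self (S A)]
      nth_rewrite 2 [hAB]
      exact mk_le_mk_of_subset (hsub A B)
    exact (hκν.trans hν_le).not_gt (h A A.2 B B.2 (Subtype.coe_injective.ne hne))
  refine ⟨range S, ?_, ?_, mk_range_eq S hS_inj⟩
  · rintro _ ⟨A, rfl⟩
    exact hS A
  · rintro _ ⟨A, rfl⟩ _ ⟨B, rfl⟩ hne
    exact (mk_le_mk_of_subset (hsub A B)).trans_lt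
      (h A A.2 B B.2 fun hAB => hne (congrArg S (Subtype.ext hAB)))

theorem KappaFamily.image (h : KappaFamily κ 𝒜) (hsize : ∀ A ∈ 𝒜, #A = ν) {f : α → β}
    (hf : InjOn f (⋃₀ 𝒜)) :
    (∀ A ∈ image f '' 𝒜, #A = ν) ∧ KappaFamily κ (image f '' 𝒜) ∧ #(image f '' 𝒜) = #𝒜 := by
  have hfA {A : Set α} (hA : A ∈ 𝒜) : InjOn f A := hf.mono (subset_sUnion_of_mem hA)
  refine ⟨?_, ?_, ?_⟩
  · rintro _ ⟨A, hA, rfl⟩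
    rw [mk_image_eq_of_injOn _ _ (hfA hA), hsize A hA]
  · rintro _ ⟨A, hA, rfl⟩ _ ⟨B, hB, rfl⟩ hne
    rw [← hf.image_inter (subset_sUnion_of_mem hA) (subset_sUnion_of_mem hB),
      mk_image_eq_of_injOn _ _ ((hfA hA).mono inter_subset_left)]
    exact h A hA B hB fun hAB => hne (hAB ▸ rfl)
  · exact mk_image_eq_of_injOn _ _ fun A hA B hB hAB =>
      (hf.image_eq_image_iff (subset_sUnion_of_mem hA) (subset_sUnion_of_mem hB)).1 hAB

end KappaFamily

theorem exists_subset_Iio_of_mk_lt_cof {γ : Type u} [LinearOrder γ] {s : Set γ}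
    (hs : #s < Order.cof γ) : ∃ t, s ⊆ Iio t :=
  not_isCofinal_iff.1 fun hcof => (Order.cof_le hcof).not_gt hs

theorem exists_succ_le_mk_subset_Iio {c : Cardinal.{u}} (hc : c.IsRegular)
    {𝒜 : Set (Set c.ord.ToType)} (hsmall : ∀ A ∈ 𝒜, #A < c) (h𝒜 : Order.succ c ≤ #𝒜) :
    ∃ t, Order.succ c ≤ #{A ∈ 𝒜 | A ⊆ Iio t} := by
  have hbdd (A : 𝒜) : ∃ t, (A : Set c.ord.ToType) ⊆ Iio t :=
    exists_subset_Iio_of_mk_lt_cof (by rw [Ordinal.cof_toType, hc.cof_ord]; exact hsmall A A.2)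
  choose b hb using hbdd
  obtain ⟨t, ht⟩ := infinite_pigeonhole_card b (Order.succ c) h𝒜
    (hc.aleph0_le.trans (Order.le_succ c))
    (by rw [(isRegular_succ hc.aleph0_le).cof_ord, mk_toType, card_ord]; exact Order.lt_succ c)
  refine ⟨t, ht.trans ?_⟩
  calc #(b ⁻¹' {t}) = #(Subtype.val '' (b ⁻¹' {t})) := (mk_image_eq Subtype.val_injective).symm
    _ ≤ _ := mk_le_mk_of_subset (by rintro _ ⟨A, rfl : b A = t, rfl⟩; exact ⟨A.2, hb A⟩)

theorem mk_Iio_ord_toType_lt {c : Cardinal.{u}} (t : c.ord.ToType) : #(Iio t) < c :=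
  (mk_Iio_lt t (by rw [mk_toType, card_ord, Ordinal.type_toType])).trans_eq
    (by rw [mk_toType, card_ord])

theorem exists_injOn_of_mk_le {α β : Type u} [Nonempty β] {s : Set α} (h : #s ≤ #β) :
    ∃ f : α → β, InjOn f s :=
  let ⟨e⟩ := Cardinal.le_def _ _ |>.1 h
  exists_injOn_iff_injective.2 ⟨e, e.injective⟩

theorem stmt4_general {α : Type u} (κ μ χ χ₁ μ₁ : Cardinal.{u})
    (hκ : ℵ₀ ≤ κ) (hsucc : χ = Order.succ χ₁)
    (hμ₁ : μ₁ = min μ χ₁) (hκμ₁ : κ ≤ μ₁) (hα : #α = χ)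
    (𝒜 : Set (Set α)) (hsize : ∀ A ∈ 𝒜, #A = μ) (hfam : KappaFamily κ 𝒜)
    (hcard : #𝒜 = Order.succ χ) :
    ∃ (β : Type u), #β = χ₁ ∧ ∃ 𝒜' : Set (Set β),
      (∀ A ∈ 𝒜', #A = μ₁) ∧ KappaFamily κ 𝒜' ∧ #𝒜' = Order.succ χ₁ := by
  subst hsucc hμ₁
  have hχ₁ : ℵ₀ ≤ χ₁ := hκ.trans (hκμ₁.trans (min_le_right _ _))
  obtain ⟨𝒜₁, hsize₁, hfam₁, hcard₁⟩ :=
    hfam.exists_shrink hκμ₁ fun A hA => (hsize A hA).symm ▸ min_le_left μ χ₁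
  obtain ⟨e⟩ : Nonempty (α ≃ (Order.succ χ₁).ord.ToType) :=
    Cardinal.eq.1 (by rw [hα, mk_toType, card_ord])
  obtain ⟨hsize₂, hfam₂, hcard₂⟩ := hfam₁.image hsize₁ e.injective.injOn
  obtain ⟨t, ht⟩ := exists_succ_le_mk_subset_Iio (isRegular_succ hχ₁)
    (fun A hA => (hsize₂ A hA).trans_lt ((min_le_right _ _).trans_lt (Order.lt_succ _)))
    (hcard₂.trans (hcard₁.trans hcard)).ge
  obtain ⟨ℬ, hℬ, hℬcard⟩ := le_mk_iff_exists_subset.1 ((Order.le_succ _).trans ht)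
  have hne : Nonempty χ₁.out :=
    mk_ne_zero_iff.1 (by rw [mk_out]; exact (aleph0_pos.trans_le hχ₁).ne')
  obtain ⟨f, hf⟩ := exists_injOn_of_mk_le (β := χ₁.out) (s := Iio t)
    (by rw [mk_out, ← Order.lt_succ_iff]; exact mk_Iio_ord_toType_lt t)
  obtain ⟨hsize', hfam', hcard'⟩ := (hfam₂.mono fun A hA => (hℬ hA).1).image
    (fun A hA => hsize₂ A (hℬ hA).1) (hf.mono (sUnion_subset fun A hA => (hℬ hA).2))
  exact ⟨χ₁.out, mk_out χ₁, _, hsize', hfam', hcard'.trans hℬcard⟩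

theorem stmt4 {α : Type u} (κ μ χ χ₁ μ₁ : Cardinal.{u})
    (hκ : ℵ₀ ≤ κ) (hκμ : κ ≤ μ) (hμχ : μ ≤ χ) (hsucc : χ = Order.succ χ₁)
    (hμ₁ : μ₁ = min μ χ₁) (hκμ₁ : κ ≤ μ₁) (hα : #α = χ)
    (𝒜 : Set (Set α)) (hsize : ∀ A ∈ 𝒜, #A = μ) (hfam : KappaFamily κ 𝒜)
    (hcard : #𝒜 = Order.succ χ) :
    ∃ (β : Type u), #β = χ₁ ∧ ∃ 𝒜' : Set (Set β),
      (∀ A ∈ 𝒜', #A = μ₁) ∧ KappaFamily κ 𝒜' ∧ #𝒜' = Order.succ χ₁ :=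
  stmt4_general κ μ χ χ₁ μ₁ hκ hsucc hμ₁ hκμ₁ hα 𝒜 hsize hfam hcard
end

section
/- Let A be a (θ,κ)-family, and suppose Y ⊆ A ∪ ⋃A is closed. If δ is a limit ordinal with cf(δ) ≠ cf(κ), and ⟨Z_i : i < δ⟩ is an increasing (under inclusion) sequence of closed subsets of Y, then Z = ⋃_{i<δ} Z_i is closed. -/
/-!
Condition (1) passes to the union of any chain of closed sets. For (2), suppose `A` meets the
union in at least `κ` points but meets each `Z i` in fewer. The traces of `A` on the `Z i` then
form an increasing chain of `κ`-small sets whose union has size at least `κ`, and any such chain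
indexed by a well-order `ι` forces `cf ι = cf κ`. If the sizes of the traces stay below some
`μ < κ`, then `κ ≤ cf ι · μ` and the indices of `κ` points of the union are cofinal, so
`cf ι = κ`, which is regular as a cofinality. Otherwise the sizes increase cofinally towards
`κ`, so cofinal subsets of `ι` and of `κ.ord` can be traded for one another.
-/

open Cardinal

universe u

/-- A (θ,κ)-family. -/
def ThetaKappaFamily {α : Type u} (θ κ : Cardinal) (𝒜 : Set (Set α)) : Prop :=
  (∀ A ∈ 𝒜, #A = θ) ∧ ∀ A ∈ 𝒜, ∀ B ∈ 𝒜, A ≠ B → #(↥(A ∩ B)) < κ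

/-- A set of vertices of `G_𝒜` is closed if (1) the intersection of two distinct
members of `𝒜` in it is contained in it, and (2) it contains any `A ∈ 𝒜` meeting
it in a set of at least κ points. -/
def ClosedVtx {α : Type u} (𝒜 : Set (Set α)) (κ : Cardinal.{u})
    (Y : Set (Set α ⊕ α)) : Prop :=
  (∀ A B : Set α, A ∈ 𝒜 → B ∈ 𝒜 → Sum.inl A ∈ Y → Sum.inl B ∈ Y → A ≠ B →
      ∀ v ∈ A ∩ B, Sum.inr v ∈ Y) ∧
  (∀ A ∈ 𝒜, κ ≤ #({v | v ∈ A ∧ Sum.inr v ∈ Y} : Set α) → Sum.inl A ∈ Y)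

open Set

theorem Monotone.iUnion_subtype_of_isCofinal {ι β : Type*} [Preorder ι] {S : ι → Set β}
    (hS : Monotone S) {C : Set ι} (hC : IsCofinal C) : ⋃ c : C, S c = ⋃ i, S i := by
  refine subset_antisymm (iUnion_subset fun c => subset_iUnion S c) (iUnion_subset fun i => ?_)
  obtain ⟨c, hc, hic⟩ := hC i
  exact (hS hic).trans (subset_iUnion (fun c : C => S c) ⟨c, hc⟩)

section CofinalityOfChains

variable {ι β : Type u} [LinearOrder ι] {S : ι → Set β} {κ : Cardinal.{u}}

theorem cof_le_of_le_mk_iUnion (hS : Monotone S) (hlt : ∀ i, #(S i) < κ)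
    (hge : κ ≤ #(⋃ i, S i)) : Order.cof ι ≤ κ := by
  obtain ⟨P, hPS, hP⟩ := le_mk_iff_exists_subset.1 hge
  have hidx (p : P) : ∃ i, p.1 ∈ S i := mem_iUnion.1 (hPS p.2)
  choose idx hidx using hidx
  refine (Order.cof_le (s := range idx) fun i => ?_).trans (mk_range_le.trans hP.le)
  obtain ⟨p, hpP, hpi⟩ : ∃ p ∈ P, p ∉ S i := not_subset.1 fun hPi =>
    (hlt i).not_ge (hP ▸ mk_le_mk_of_subset hPi)
  exact ⟨idx ⟨p, hpP⟩, mem_range_self _, le_of_not_ge fun h => hpi (hS h (hidx ⟨p, hpP⟩))⟩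

theorem le_cof_of_le_mk_iUnion (hκ : ℵ₀ ≤ κ) (hS : Monotone S) (hbound : ⨆ i, #(S i) < κ)
    (hge : κ ≤ #(⋃ i, S i)) : κ ≤ Order.cof ι := by
  obtain ⟨C, hC, hCcof⟩ := Order.exists_cof_eq ι
  by_contra! hcof
  have hsupC : ⨆ c : C, #(S c) ≤ ⨆ i, #(S i) :=
    ciSup_le' fun c => le_ciSup (f := fun i => #(S i)) bddAbove_of_small c
  have hsmall : #(⋃ c : C, S c) < κ := calc
    _ ≤ #C * ⨆ c : C, #(S c) := mk_iUnion_le _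
    _ < κ := mul_lt_of_lt hκ (hCcof ▸ hcof) (hsupC.trans_lt hbound)
  rw [hS.iUnion_subtype_of_isCofinal hC] at hsmall
  exact hsmall.not_ge hge

theorem cof_eq_cof_ord_of_iSup_eq {c : ι → Cardinal.{u}} (hc : Monotone c) (hlt : ∀ i, c i < κ)
    (hsup : ⨆ i, c i = κ) : Order.cof ι = κ.ord.cof := by
  apply le_antisymm
  · obtain ⟨T, hT, hTcof⟩ := Order.exists_cof_eq κ.ord.ToType
    have hg (t : T) : ∃ i, (t.1 : Ordinal).card < c i := by
      refine exists_lt_of_lt_ciSup' ?_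
      rw [hsup, ← lt_ord]
      exact (Ordinal.ToType.mk.symm t.1).2
    choose g hg using hg
    refine (Order.cof_le (s := range g) fun i => ?_).trans (mk_range_le.trans ?_)
    · obtain ⟨t, ht, hit⟩ := hT (Ordinal.ToType.mk ⟨(c i).ord, ord_lt_ord.2 (hlt i)⟩)
      have hci : c i ≤ (t : Ordinal).card := by
        simpa using Ordinal.card_le_card (Ordinal.ToType.mk.symm.monotone hit)
      exact ⟨g ⟨t, ht⟩, mem_range_self _,
        le_of_not_ge fun h => (hc h).not_gt (hci.trans_lt (hg ⟨t, ht⟩))⟩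
    · rw [hTcof, Ordinal.cof_toType]
  · obtain ⟨C, hC, hCcof⟩ := Order.exists_cof_eq ι
    by_contra! hcof
    have hsmall : ⨆ x : C, c x < κ := iSup_lt_of_lt_cof_ord (hCcof ▸ hcof) fun x => hlt x
    refine hsmall.not_ge (hsup ▸ ciSup_le' fun i => ?_)
    obtain ⟨x, hx, hix⟩ := hC i
    exact (hc hix).trans (le_ciSup bddAbove_of_small (⟨x, hx⟩ : C))

theorem cof_eq_cof_ord_of_le_mk_iUnion [WellFoundedLT ι] (hκ : ℵ₀ ≤ κ) (hS : Monotone S)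
    (hlt : ∀ i, #(S i) < κ) (hge : κ ≤ #(⋃ i, S i)) : Order.cof ι = κ.ord.cof := by
  rcases (ciSup_le' fun i => (hlt i).le : ⨆ i, #(S i) ≤ κ).lt_or_eq with hbound | hsup
  · have hcof := le_antisymm (cof_le_of_le_mk_iUnion hS hlt hge)
      (le_cof_of_le_mk_iUnion hκ hS hbound hge)
    rw [← hcof, Order.cof_ord_cof]
  · exact cof_eq_cof_ord_of_iSup_eq (fun _ _ h => mk_le_mk_of_subset (hS h)) hlt hsup

end CofinalityOfChains

theorem ClosedVtx.iUnion_of_cof_ne {α ι : Type u} [LinearOrder ι] [WellFoundedLT ι]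
    {𝒜 : Set (Set α)} {κ : Cardinal.{u}} (hκ : ℵ₀ ≤ κ) {Z : ι → Set (Set α ⊕ α)}
    (hZ : Monotone Z) (hclosed : ∀ i, ClosedVtx 𝒜 κ (Z i)) (hcof : Order.cof ι ≠ κ.ord.cof) :
    ClosedVtx 𝒜 κ (⋃ i, Z i) := by
  refine ⟨fun A B hA hB hAZ hBZ hne v hv => ?_, fun A hA hκA => ?_⟩
  · obtain ⟨i, hi⟩ := mem_iUnion.1 hAZ
    obtain ⟨j, hj⟩ := mem_iUnion.1 hBZ
    exact mem_iUnion.2 ⟨max i j, (hclosed _).1 A B hA hB (hZ (le_max_left i j) hi)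
      (hZ (le_max_right i j) hj) hne v hv⟩
  · by_contra hAZ
    refine hcof (cof_eq_cof_ord_of_le_mk_iUnion hκ (S := fun i => {v | v ∈ A ∧ Sum.inr v ∈ Z i})
      (fun i j h v hv => ⟨hv.1, hZ h hv.2⟩) (fun i => ?_) ?_)
    · exact lt_of_not_ge fun h => hAZ (mem_iUnion.2 ⟨i, (hclosed i).2 A hA h⟩)
    · convert hκA using 3
      ext v
      simp

theorem stmt5_general {α : Type u} (κ : Cardinal.{u}) (hκ : ℵ₀ ≤ κ)
    (𝒜 : Set (Set α))
    (δ : Ordinal.{u}) (hcof : δ.cof ≠ κ.ord.cof)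
    (Z : {i : Ordinal // i < δ} → Set (Set α ⊕ α))
    (hmono : ∀ i j, i ≤ j → Z i ⊆ Z j)
    (hclosed : ∀ i, ClosedVtx 𝒜 κ (Z i)) :
    ClosedVtx 𝒜 κ (⋃ i, Z i) := by
  let e := (Ordinal.ToType.mk (o := δ)).symm
  have hU : ⋃ k, Z (e k) = ⋃ i, Z i := e.surjective.iUnion_comp _
  rw [← hU]
  exact ClosedVtx.iUnion_of_cof_ne hκ (fun _ _ h => hmono _ _ (e.monotone h)) (fun _ => hclosed _)
    (by rwa [Ordinal.cof_toType])

theorem stmt5 {α : Type u} (κ θ : Cardinal.{u}) (hκ : ℵ₀ ≤ κ) (hκθ : κ < θ)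
    (𝒜 : Set (Set α)) (hfam : ThetaKappaFamily θ κ 𝒜)
    (Y : Set (Set α ⊕ α)) (hY : ClosedVtx 𝒜 κ Y)
    (δ : Ordinal.{u}) (hδ : Order.IsSuccLimit δ) (hcof : δ.cof ≠ κ.ord.cof)
    (Z : {i : Ordinal // i < δ} → Set (Set α ⊕ α))
    (hZY : ∀ i, Z i ⊆ Y) (hmono : ∀ i j, i ≤ j → Z i ⊆ Z j)
    (hclosed : ∀ i, ClosedVtx 𝒜 κ (Z i)) :
    ClosedVtx 𝒜 κ (⋃ i, Z i) :=
  stmt5_general κ hκ 𝒜 δ hcof Z hmono hclosed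
end

section
/- Let A be a (θ,κ)-family and let λ be a cardinal with λ^κ = λ and λ ≥ θ. Then every set X of vertices of G_A with |X| = λ is contained in a closed set of vertices of cardinality λ. Moreover, if Y₁ is closed and X ⊆ Y₁ has cardinality λ, then there is a closed Y with X ⊆ Y ⊆ Y₁ and |Y| = λ. -/
/-!
Close `X` under the operator that adds the pairwise intersections of the members already present
and the members meeting the present points in at least `κ` points, iterating it transfinitely up to
`κ⁺`. A step keeps the size `≤ λ`: there are at most `λ` pairs of members, each meeting in fewer
than `κ` points, and since distinct members share fewer than `κ` points, a member meeting a set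
`P` of points in `κ` points is determined by a `κ`-sequence in `P`, so there are at most
`λ ^ κ = λ` of them. Each rule has at most `κ` premises and `κ⁺` is regular, so stage `κ⁺` is
closed. Closed sets are stable under intersection, which cuts the result down into `Y₁`.
-/

open Cardinal

universe u

/-- The vertex set of `G_𝒜`. -/
def vertexSet {α : Type u} (𝒜 : Set (Set α)) : Set (Set α ⊕ α) :=
  (Sum.inl '' 𝒜) ∪ (Sum.inr '' ⋃₀ 𝒜)

namespace Set

variable {β : Type u} (F : Set β → Set β) (X : Set β)

noncomputable def closureStage : Ordinal.{u} → Set β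
  | o => X ∪ ⋃ p < o, F (closureStage p)
  termination_by o => o

theorem closureStage_eq (o : Ordinal.{u}) :
    closureStage F X o = X ∪ ⋃ p < o, F (closureStage F X p) := by
  rw [closureStage]

theorem subset_closureStage (o : Ordinal.{u}) : X ⊆ closureStage F X o := by
  rw [closureStage_eq]; exact subset_union_left

theorem apply_closureStage_subset {p o : Ordinal.{u}} (h : p < o) :
    F (closureStage F X p) ⊆ closureStage F X o := by
  rw [closureStage_eq F X o]
  exact subset_union_of_subset_right
    (subset_biUnion_of_mem (u := fun p => F (closureStage F X p)) h) _

theorem closureStage_mono : Monotone (closureStage F X) := fun p o h => by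
  rw [closureStage_eq F X p, closureStage_eq F X o]
  exact union_subset_union_right _ (biUnion_subset_biUnion_left fun _ hq => lt_of_lt_of_le hq h)

theorem exists_lt_of_mem_closureStage {o : Ordinal.{u}} (ho : Order.IsSuccLimit o) {x : β}
    (hx : x ∈ closureStage F X o) : ∃ p < o, x ∈ closureStage F X p := by
  rw [closureStage_eq] at hx
  obtain hx | hx := hx
  · exact ⟨0, ho.bot_lt, subset_closureStage F X 0 hx⟩
  · obtain ⟨p, hp, hx⟩ := mem_iUnion₂.1 hx
    exact ⟨p + 1, ho.add_one_lt hp,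
      apply_closureStage_subset F X (Order.lt_add_one_iff.2 le_rfl) hx⟩

theorem mk_closureStage_le {c : Cardinal.{u}} (hc : ℵ₀ ≤ c)
    (hF : ∀ S : Set β, #S ≤ c → #(F S) ≤ c) (hX : #X ≤ c) {o : Ordinal.{u}} (ho : o.card ≤ c) :
    #(closureStage F X o) ≤ c := by
  induction o using WellFoundedLT.induction with
  | _ o ih =>
    rw [closureStage_eq]
    refine (mk_union_le _ _).trans ((add_le_add hX ?_).trans (add_eq_self hc).le)
    exact mk_biUnion_le_of_le ho hc _ fun p hp =>
      hF _ (ih p hp ((Ordinal.card_le_card hp.le).trans ho))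

theorem apply_closureStage_ord_succ_subset {κ : Cardinal.{u}} (hκ : ℵ₀ ≤ κ) (hF : Monotone F)
    (hsupport : ∀ S, ∀ x ∈ F S, ∃ T ⊆ S, #T ≤ κ ∧ x ∈ F T) :
    F (closureStage F X (Order.succ κ).ord) ⊆ closureStage F X (Order.succ κ).ord := by
  set c := (Order.succ κ).ord
  have hc : Order.IsSuccLimit c := isSuccLimit_ord (hκ.trans (Order.le_succ κ))
  intro x hx
  obtain ⟨T, hTS, hTκ, hxT⟩ := hsupport _ x hx
  choose f hfc hTf using fun t : T => exists_lt_of_mem_closureStage F X hc (hTS t.2)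
  have hsup : ⨆ t, f t < c := Ordinal.iSup_lt_of_lt_cof
    (by rw [(isRegular_succ hκ).cof_ord]; exact Order.lt_succ_of_le hTκ) hfc
  refine apply_closureStage_subset F X hsup (hF (fun t ht => ?_) hxT)
  exact closureStage_mono F X (Ordinal.le_iSup f ⟨t, ht⟩) (hTf ⟨t, ht⟩)

end Set

open Set

section

variable {α : Type u} {𝒜 : Set (Set α)} {κ : Cardinal.{u}}

theorem mk_sep_le_mk_pow_of_pairwise_mk_inter_lt
    (h𝒜 : 𝒜.Pairwise fun A B => #(A ∩ B : Set α) < κ) (P : Set α) :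
    #{A ∈ 𝒜 | κ ≤ #(A ∩ P : Set α)} ≤ #P ^ κ := by
  have e : ∀ A : {A ∈ 𝒜 | κ ≤ #(A ∩ P : Set α)}, κ.out ↪ (A.1 ∩ P : Set α) :=
    fun A => Classical.choice <| by rw [← le_def, mk_out]; exact A.2.2
  calc _ ≤ #(κ.out → P) := mk_le_of_injective (f := fun A i => ⟨e A i, (e A i).2.2⟩) ?_
    _ = #P ^ κ := by rw [← power_def, mk_out]
  intro A B hAB
  by_contra hne
  refine (h𝒜 A.2.1 B.2.1 (Subtype.coe_injective.ne hne)).not_ge ?_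
  have hAB' : ∀ i, (e A i : α) = e B i := fun i => congrArg Subtype.val (congrFun hAB i)
  calc κ = #(range fun i => (e A i : α)) :=
        ((mk_range_eq _ (Subtype.val_injective.comp (e A).injective)).trans (mk_out κ)).symm
    _ ≤ #(A.1 ∩ B.1 : Set α) := mk_le_mk_of_subset <| range_subset_iff.2 fun i =>
        ⟨(e A i).2.1, hAB' i ▸ (e B i).2.1⟩

variable (𝒜 κ) in
def closureStep (S : Set (Set α ⊕ α)) : Set (Set α ⊕ α) :=
  Sum.inr '' (⋃ p ∈ (𝒜 ∩ Sum.inl ⁻¹' S).offDiag, p.1 ∩ p.2) ∪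
    Sum.inl '' {A ∈ 𝒜 | κ ≤ #(A ∩ Sum.inr ⁻¹' S : Set α)}

theorem closedVtx_iff_closureStep_subset {Y : Set (Set α ⊕ α)} :
    ClosedVtx 𝒜 κ Y ↔ closureStep 𝒜 κ Y ⊆ Y := by
  simp only [closureStep, union_subset_iff, image_subset_iff, iUnion₂_subset_iff]
  refine and_congr ⟨fun h p hp v hv => ?_, fun h A B hA hB hAY hBY hne v hv => ?_⟩
    ⟨fun h A hA => h A hA.1 hA.2, fun h A hA hκA => h ⟨hA, hκA⟩⟩
  · exact h p.1 p.2 hp.1.1 hp.2.1.1 hp.1.2 hp.2.1.2 hp.2.2 v hv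
  · exact h (A, B) ⟨⟨hA, hAY⟩, ⟨hB, hBY⟩, hne⟩ hv

theorem closureStep_mono : Monotone (closureStep 𝒜 κ) := by
  intro S S' h
  refine union_subset_union (image_mono (biUnion_mono (offDiag_mono ?_) fun _ _ => subset_rfl))
    (image_mono fun A hA => ⟨hA.1, hA.2.trans (mk_le_mk_of_subset ?_)⟩) <;>
  exact inter_subset_inter_right _ (preimage_mono h)

theorem exists_subset_mk_le_mem_closureStep (hκ : ℵ₀ ≤ κ) {S : Set (Set α ⊕ α)} {x : Set α ⊕ α}
    (hx : x ∈ closureStep 𝒜 κ S) : ∃ T ⊆ S, #T ≤ κ ∧ x ∈ closureStep 𝒜 κ T := by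
  obtain ⟨v, hv, rfl⟩ | ⟨A, ⟨hA, hκA⟩, rfl⟩ := hx
  · obtain ⟨p, ⟨⟨hA, hAS⟩, ⟨hB, hBS⟩, hne⟩, hvp⟩ := mem_iUnion₂.1 hv
    refine ⟨{Sum.inl p.1, Sum.inl p.2}, pair_subset hAS hBS, ?_, ?_⟩
    · exact ((toFinite _).lt_aleph0).le.trans hκ
    · exact Or.inl ⟨v, mem_iUnion₂.2 ⟨p, ⟨⟨hA, Or.inl rfl⟩, ⟨hB, Or.inr rfl⟩, hne⟩, hvp⟩, rfl⟩
  · obtain ⟨T, hT, hTκ⟩ := le_mk_iff_exists_subset.1 hκA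
    refine ⟨Sum.inr '' T, image_subset_iff.2 fun v hv => (hT hv).2, mk_image_le.trans hTκ.le, ?_⟩
    refine Or.inr ⟨A, ⟨hA, hTκ.ge.trans (mk_le_mk_of_subset fun v hv => ?_)⟩, rfl⟩
    exact ⟨(hT hv).1, mem_image_of_mem _ hv⟩

theorem mk_closureStep_le {c : Cardinal.{u}} (hκ : ℵ₀ ≤ κ) (hκc : κ ≤ c) (hc : c ^ κ = c)
    (h𝒜 : 𝒜.Pairwise fun A B => #(A ∩ B : Set α) < κ) {S : Set (Set α ⊕ α)} (hS : #S ≤ c) :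
    #(closureStep 𝒜 κ S) ≤ c := by
  have hc₀ : ℵ₀ ≤ c := hκ.trans hκc
  have hsets : #(𝒜 ∩ Sum.inl ⁻¹' S : Set (Set α)) ≤ c :=
    (mk_le_mk_of_subset inter_subset_right).trans
      ((mk_preimage_of_injective _ _ Sum.inl_injective).trans hS)
  have hpoints : #(Sum.inr ⁻¹' S : Set α) ≤ c :=
    (mk_preimage_of_injective _ _ Sum.inr_injective).trans hS
  refine (mk_union_le _ _).trans ((add_le_add ?_ ?_).trans (add_eq_self hc₀).le)
  · calc _ ≤ #(⋃ p ∈ (𝒜 ∩ Sum.inl ⁻¹' S).offDiag, p.1 ∩ p.2) := mk_image_le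
      _ ≤ #(𝒜 ∩ Sum.inl ⁻¹' S).offDiag * κ := (mk_biUnion_le _ _).trans <|
          mul_le_mul' le_rfl (ciSup_le' fun p => (h𝒜 p.2.1.1 p.2.2.1.1 p.2.2.2).le)
      _ ≤ c * c * c := by
          gcongr
          exact (mk_le_mk_of_subset (offDiag_subset_prod _)).trans_eq (mk_setProd _ _) |>.trans
            (mul_le_mul' hsets hsets)
      _ = c := by rw [mul_eq_self hc₀, mul_eq_self hc₀]
  · calc _ ≤ #{A ∈ 𝒜 | κ ≤ #(A ∩ Sum.inr ⁻¹' S : Set α)} := mk_image_le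
      _ ≤ #(Sum.inr ⁻¹' S : Set α) ^ κ := mk_sep_le_mk_pow_of_pairwise_mk_inter_lt h𝒜 _
      _ ≤ c := (power_le_power_right hpoints).trans hc.le

theorem ClosedVtx.inter {Y Z : Set (Set α ⊕ α)} (hY : ClosedVtx 𝒜 κ Y) (hZ : ClosedVtx 𝒜 κ Z) :
    ClosedVtx 𝒜 κ (Y ∩ Z) :=
  ⟨fun A B hA hB hAYZ hBYZ hne v hv =>
      ⟨hY.1 A B hA hB hAYZ.1 hBYZ.1 hne v hv, hZ.1 A B hA hB hAYZ.2 hBYZ.2 hne v hv⟩,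
    fun A hA hκA => ⟨hY.2 A hA (hκA.trans (mk_le_mk_of_subset fun _ hv => ⟨hv.1, hv.2.1⟩)),
      hZ.2 A hA (hκA.trans (mk_le_mk_of_subset fun _ hv => ⟨hv.1, hv.2.2⟩))⟩⟩

variable (𝒜 κ) in
theorem closedVtx_vertexSet : ClosedVtx 𝒜 κ (vertexSet 𝒜) :=
  ⟨fun A _ hA _ _ _ _ v hv => Or.inr ⟨v, ⟨A, hA, hv.1⟩, rfl⟩, fun A hA _ => Or.inl ⟨A, hA, rfl⟩⟩

theorem exists_closedVtx_superset_mk_le {c : Cardinal.{u}} (hκ : ℵ₀ ≤ κ) (hκc : κ < c)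
    (hc : c ^ κ = c) (h𝒜 : 𝒜.Pairwise fun A B => #(A ∩ B : Set α) < κ) {X : Set (Set α ⊕ α)}
    (hX : #X ≤ c) : ∃ Y, X ⊆ Y ∧ ClosedVtx 𝒜 κ Y ∧ #Y ≤ c :=
  ⟨closureStage (closureStep 𝒜 κ) X (Order.succ κ).ord, subset_closureStage _ _ _,
    closedVtx_iff_closureStep_subset.2 <| apply_closureStage_ord_succ_subset _ _ hκ closureStep_mono
      fun _ _ => exists_subset_mk_le_mem_closureStep hκ,
    mk_closureStage_le _ _ (hκ.trans hκc.le) (fun _ => mk_closureStep_le hκ hκc.le hc h𝒜) hX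
      (by rw [card_ord]; exact Order.succ_le_of_lt hκc)⟩

theorem exists_closedVtx_between {c : Cardinal.{u}} (hκ : ℵ₀ ≤ κ) (hκc : κ < c)
    (hc : c ^ κ = c) (h𝒜 : 𝒜.Pairwise fun A B => #(A ∩ B : Set α) < κ) {Z : Set (Set α ⊕ α)}
    (hZ : ClosedVtx 𝒜 κ Z) {X : Set (Set α ⊕ α)} (hXZ : X ⊆ Z) (hX : #X = c) :
    ∃ Y, X ⊆ Y ∧ Y ⊆ Z ∧ ClosedVtx 𝒜 κ Y ∧ #Y = c := by
  obtain ⟨Y, hXY, hY, hYc⟩ := exists_closedVtx_superset_mk_le hκ hκc hc h𝒜 hX.le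
  refine ⟨Y ∩ Z, subset_inter hXY hXZ, inter_subset_right, hY.inter hZ, le_antisymm ?_ ?_⟩
  · exact (mk_le_mk_of_subset inter_subset_left).trans hYc
  · exact hX ▸ mk_le_mk_of_subset (subset_inter hXY hXZ)

end

theorem stmt6 {α : Type u} (κ θ lam : Cardinal.{u}) (hκ : ℵ₀ ≤ κ) (hκθ : κ < θ)
    (hthl : θ ≤ lam) (hl : lam ^ κ = lam)
    (𝒜 : Set (Set α)) (hfam : ThetaKappaFamily θ κ 𝒜) :
    (∀ X : Set (Set α ⊕ α), X ⊆ vertexSet 𝒜 → #X = lam →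
      ∃ Y : Set (Set α ⊕ α), X ⊆ Y ∧ Y ⊆ vertexSet 𝒜 ∧ ClosedVtx 𝒜 κ Y ∧ #Y = lam) ∧
    (∀ Y₁ : Set (Set α ⊕ α), Y₁ ⊆ vertexSet 𝒜 → ClosedVtx 𝒜 κ Y₁ →
      ∀ X : Set (Set α ⊕ α), X ⊆ Y₁ → #X = lam →
      ∃ Y : Set (Set α ⊕ α), X ⊆ Y ∧ Y ⊆ Y₁ ∧ ClosedVtx 𝒜 κ Y ∧ #Y = lam) := by
  have h𝒜 : 𝒜.Pairwise fun A B => #(A ∩ B : Set α) < κ := fun A hA B hB => hfam.2 A hA B hB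
  have hκl : κ < lam := hκθ.trans_le hthl
  exact ⟨fun X hX hXl => exists_closedVtx_between hκ hκl hl h𝒜 (closedVtx_vertexSet 𝒜 κ) hX hXl,
    fun Y₁ _ hY₁ X hX hXl => exists_closedVtx_between hκ hκl hl h𝒜 hY₁ hX hXl⟩
end

section
/- The list-chromatic number of the complete bipartite graph K(κ, 2^κ) is greater than κ, for every infinite cardinal κ: there is an assignment of lists of size κ to the vertices of K(κ, 2^κ) admitting no proper coloring from the lists. -/
/-!
Colour with `A × A`. A vertex `a ∈ A` gets the row `{a} × A`, and a vertex of `B`, identified with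
a function `f : A → A` (possible since `κ ^ κ = 2 ^ κ`), gets the graph of `f`. Colouring the
`A`-side from its lists picks one point in every row, i.e. the graph of some `g : A → A`; the vertex
of `B` whose list is that graph then sees every one of its colours on a neighbour.
-/

open Cardinal

universe u

namespace ListColoring

variable {A B : Type u}

def graphLists (e : B ≃ (A → A)) : A ⊕ B → Set (A × A) :=
  Sum.elim (fun a => Set.range (Prod.mk a)) (fun b => Set.range fun a => (a, e b a))

theorem mk_graphLists (e : B ≃ (A → A)) (x : A ⊕ B) : #(graphLists e x) = #A := by
  cases x with
  | inl a => exact mk_range_eq _ fun _ _ h => congrArg Prod.snd h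
  | inr b => exact mk_range_eq _ fun _ _ h => congrArg Prod.fst h

theorem not_exists_proper_choice (e : B ≃ (A → A)) :
    ¬ ∃ c : A ⊕ B → A × A, (∀ x, c x ∈ graphLists e x) ∧
      ∀ (a : A) (b : B), c (Sum.inl a) ≠ c (Sum.inr b) := by
  rintro ⟨c, hc, hproper⟩
  let g : A → A := fun a => (c (Sum.inl a)).2
  have hrow : ∀ a, c (Sum.inl a) = (a, g a) := fun a => by
    obtain ⟨x, hx⟩ := hc (Sum.inl a)
    simp only [g, ← hx]
  obtain ⟨a, ha⟩ := hc (Sum.inr (e.symm g))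
  exact hproper a _ (by rw [hrow, ← ha, e.apply_symm_apply])

end ListColoring

theorem stmt8 (κ : Cardinal.{u}) (hκ : ℵ₀ ≤ κ)
    (A B : Type u) (hA : #A = κ) (hB : #B = 2 ^ κ) :
    ∃ (C : Type u) (L : (A ⊕ B) → Set C), (∀ x, #(L x) = κ) ∧
      ¬ ∃ c : (A ⊕ B) → C, (∀ x, c x ∈ L x) ∧
          ∀ (a : A) (b : B), c (Sum.inl a) ≠ c (Sum.inr b) := by
  have hB' : #B = #(A → A) := by
    rw [hB, ← power_def, hA, power_self_eq hκ]
  obtain ⟨e⟩ := Cardinal.eq.1 hB'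
  exact ⟨A × A, ListColoring.graphLists e,
    fun x => (ListColoring.mk_graphLists e x).trans hA, ListColoring.not_exists_proper_choice e⟩
end

section
/- Let λ > θ be regular cardinals and suppose there exist a stationary set S ⊆ {δ < λ : cf(δ) = θ} and sets C_δ ⊆ δ with otp(C_δ) = θ for δ ∈ S, such that for every u ∈ [λ]^κ the set {δ ∈ S : u ⊆ C_δ} is bounded in λ. Then for every cardinal ∂ with κ ≤ ∂ < θ there exist μ < λ and a family A ⊆ [μ]^∂ of cardinality λ such that for every u ∈ [μ]^κ, fewer than λ members v of A satisfy u ⊆ v. -/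
/-!
For `δ ∈ S` let `x δ` be the `d`-th element of `C δ` (it exists as `d < θ = otp (C δ)`), and let
`v δ = C δ ∩ x δ`, a set of size `d`. Since `x δ < δ`, Fodor's lemma makes `x δ` equal to a fixed
`γ` on an unbounded `T ⊆ S`. The family `{v δ : δ ∈ T}` of subsets of `γ` works, after relabelling
`γ` as `μ = |γ|`: a `κ`-set `u` lies in `v δ ⊆ C δ` only for boundedly many `δ`, and, as `λ` is
regular, fewer than `λ` members of the family cannot account for the unboundedly many `δ ∈ T`.
-/

open Cardinal Ordinal

universe u

/-- A club subset of (the ordinals below) `Λ`: closed and unbounded. -/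
def IsClubIn (C : Set Ordinal.{u}) (Λ : Ordinal.{u}) : Prop :=
  C ⊆ Set.Iio Λ ∧
  (∀ a < Λ, ∃ b ∈ C, a ≤ b) ∧
  (∀ s : Set Ordinal.{u}, s ⊆ C → s.Nonempty → sSup s < Λ → sSup s ∈ C)

/-- A stationary subset of `Λ`: meets every club. -/
def IsStationaryIn (S : Set Ordinal.{u}) (Λ : Ordinal.{u}) : Prop :=
  S ⊆ Set.Iio Λ ∧ ∀ C : Set Ordinal.{u}, IsClubIn C Λ → (S ∩ C).Nonempty

open Set

universe v

theorem Set.exists_bijOn_of_mk_eq {α β : Type v} [Nonempty β] {s : Set α} {t : Set β}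
    (h : #s = #t) : ∃ f : α → β, BijOn f s t := by
  obtain ⟨e⟩ := Cardinal.eq.1 h
  classical
  set f := Function.extend Subtype.val (fun a : s => (e a : β)) fun _ => Classical.arbitrary β
  have hf (a : s) : f a = e a := Subtype.val_injective.extend_apply _ _ a
  refine ⟨f, fun a ha => ?_, fun a ha b hb hab => ?_, fun b hb => ⟨e.symm ⟨b, hb⟩, (e.symm _).2, ?_⟩⟩
  · simpa only [hf ⟨a, ha⟩] using (e ⟨a, ha⟩).2
  · rw [hf ⟨a, ha⟩, hf ⟨b, hb⟩] at hab
    simpa using e.injective (Subtype.ext hab)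
  · simp [hf]

section SparseFamily

variable {α β : Type v}

def IsSparseFamily (X : Set α) (κ d lam : Cardinal) (𝒜 : Set (Set α)) : Prop :=
  (∀ v ∈ 𝒜, v ⊆ X ∧ #v = d) ∧ #𝒜 = lam ∧ ∀ u ⊆ X, #u = κ → #{v | v ∈ 𝒜 ∧ u ⊆ v} < lam

theorem IsSparseFamily.image {X : Set α} {κ d lam : Cardinal} {𝒜 : Set (Set α)} {f : α → β}
    (hf : InjOn f X) (h : IsSparseFamily X κ d lam 𝒜) :
    IsSparseFamily (f '' X) κ d lam ((f '' ·) '' 𝒜) := by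
  obtain ⟨hsub, hcard, hcount⟩ := h
  have hinj : InjOn (f '' ·) 𝒜 := fun v hv w hw hvw =>
    (hf.image_eq_image_iff (hsub v hv).1 (hsub w hw).1).1 hvw
  refine ⟨?_, by rw [mk_image_eq_of_injOn _ _ hinj, hcard], fun u hu huκ => ?_⟩
  · rintro _ ⟨v, hv, rfl⟩
    exact ⟨image_mono (hsub v hv).1,
      (mk_image_eq_of_injOn f v (hf.mono (hsub v hv).1)).trans (hsub v hv).2⟩
  set u' := X ∩ f ⁻¹' u
  have hu' : f '' u' = u := by rw [image_inter_preimage, inter_eq_right.2 hu]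
  have hu'κ : #u' = κ := by
    rw [← huκ, ← hu', mk_image_eq_of_injOn _ _ (hf.mono inter_subset_left)]
  calc #{w | w ∈ (f '' ·) '' 𝒜 ∧ u ⊆ w} ≤ #((f '' ·) '' {v | v ∈ 𝒜 ∧ u' ⊆ v}) := by
        refine mk_le_mk_of_subset ?_
        rintro _ ⟨⟨v, hv, rfl⟩, huv⟩
        refine ⟨v, ⟨hv, fun a ha => ?_⟩, rfl⟩
        obtain ⟨b, hb, hba⟩ := huv ha.2
        rwa [hf ha.1 ((hsub v hv).1 hb) hba.symm]
    _ ≤ #{v | v ∈ 𝒜 ∧ u' ⊆ v} := mk_image_le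
    _ < lam := hcount u' inter_subset_left hu'κ

end SparseFamily

theorem IsSparseFamily.exists_Iio_card_ord {γ : Ordinal.{u}} {κ d lam : Cardinal.{u + 1}}
    {𝒜 : Set (Set Ordinal.{u})} (h : IsSparseFamily (Iio γ) κ d lam 𝒜) :
    ∃ 𝒜' : Set (Set Ordinal.{u}), IsSparseFamily (Iio γ.card.ord) κ d lam 𝒜' := by
  obtain ⟨f, hf⟩ := exists_bijOn_of_mk_eq (s := Iio γ) (t := Iio γ.card.ord)
    (by rw [Cardinal.mk_Iio_ordinal, Cardinal.mk_Iio_ordinal, card_ord])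
  exact ⟨_, hf.image_eq ▸ h.image hf.injOn⟩

theorem Cardinal.mk_Iic_lt_lift_of_lt_ord {c : Cardinal.{u}} (hc : ℵ₀ ≤ c) {β : Ordinal.{u}}
    (hβ : β < c.ord) : #(Iic β) < lift.{u + 1} c := by
  rw [← Order.Iio_succ, mk_Iio_ordinal, lift_lt, ← lt_ord]
  exact (isSuccLimit_ord hc).succ_lt hβ

theorem Cardinal.IsRegular.lift_cof_ord {c : Cardinal.{u}} (hc : c.IsRegular) :
    (Ordinal.lift.{v} c.ord).cof = Cardinal.lift.{v} c := by
  rw [← lift_cof, hc.cof_ord]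

theorem isClubIn_closurePoints {lam : Cardinal.{u}} (hlreg : lam.IsRegular) (hlam : ℵ₀ < lam)
    {h : Ordinal.{u} → Ordinal.{u}} (hh : ∀ γ < lam.ord, h γ < lam.ord) :
    IsClubIn {α | α < lam.ord ∧ ∀ γ < α, h γ < α} lam.ord := by
  let F : Ordinal.{u} → Ordinal.{u} := fun b => ⨆ γ : Iio b, h γ + 1
  have hF : ∀ b < lam.ord, F b < lam.ord := fun b hb => by
    refine lift_iSup_add_one_lt_of_lt_cof ?_ fun γ => hh γ (γ.2.trans hb)
    rw [hlreg.lift_cof_ord, Cardinal.mk_Iio_ordinal, Cardinal.lift_lift, Cardinal.lift_lt]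
    exact lt_ord.1 hb
  refine ⟨fun α hα => hα.1, fun a ha => ⟨nfp F a, ⟨?_, fun γ hγ => ?_⟩, le_nfp F a⟩, ?_⟩
  · exact nfp_lt_ord (by rwa [hlreg.cof_ord]) hF ha
  · obtain ⟨n, hn⟩ := lt_nfp_iff.1 hγ
    calc h γ < h γ + 1 := lt_add_one _
      _ ≤ F (F^[n] a) := Ordinal.le_iSup (fun γ : Iio (F^[n] a) => h γ + 1) ⟨γ, hn⟩
      _ = F^[n + 1] a := (Function.iterate_succ_apply' F n a).symm
      _ ≤ nfp F a := iterate_le_nfp F a (n + 1)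
  · intro s hs hne hsup
    refine ⟨hsup, fun γ hγ => ?_⟩
    obtain ⟨α, hα, hγα⟩ := exists_lt_of_lt_csSup hne hγ
    exact ((hs hα).2 γ hγα).trans_le (le_csSup ⟨lam.ord, fun x hx => (hs hx).1.le⟩ hα)

theorem IsStationaryIn.exists_unbounded_fiber {lam : Cardinal.{u}} (hlreg : lam.IsRegular)
    (hlam : ℵ₀ < lam) {S : Set Ordinal.{u}} (hS : IsStationaryIn S lam.ord)
    {g : Ordinal.{u} → Ordinal.{u}} (hg : ∀ δ ∈ S, g δ < δ) :
    ∃ γ, ∀ β < lam.ord, ∃ δ ∈ S, g δ = γ ∧ β < δ := by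
  by_contra! hbounded
  choose! h hh_lt hh using hbounded
  obtain ⟨δ, hδS, -, hδ⟩ := hS.2 _ (isClubIn_closurePoints hlreg hlam fun γ _ => hh_lt γ)
  exact (hδ (g δ) (hg δ hδS)).not_ge (hh (g δ) δ hδS rfl)

theorem exists_mem_mk_inter_Iio_eq {C : Set Ordinal.{u}} {d : Cardinal.{u}}
    (hd : Ordinal.lift.{u + 1} d.ord < Ordinal.type ((· < ·) : C → C → Prop)) :
    ∃ x ∈ C, #↥(C ∩ Iio x) = lift.{u + 1} d := by
  set x : C := enum (α := C) (· < ·) ⟨_, hd⟩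
  have hx : C ∩ Iio x = Subtype.val '' {y : C | y < x} := by
    ext y
    simp [← Subtype.coe_lt_coe, and_comm]
  refine ⟨x, x.2, ?_⟩
  rw [hx, mk_image_eq Subtype.val_injective]
  change #{y : C // y < x} = _
  rw [← card_typein, typein_enum, ← lift_card, card_ord]

theorem isSparseFamily_image_of_bounded {lam : Cardinal.{u}} (hlreg : lam.IsRegular)
    {κ d : Cardinal.{u + 1}} (hκd : κ ≤ d) {X T : Set Ordinal.{u}} (hT : T ⊆ Iio lam.ord)
    (hT_unbdd : ∀ β < lam.ord, ∃ δ ∈ T, β < δ) {v : Ordinal.{u} → Set Ordinal.{u}}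
    (hv : ∀ δ ∈ T, v δ ⊆ X ∧ #(v δ) = d)
    (hbdd : ∀ u ⊆ X, #u = κ → ∃ β < lam.ord, ∀ δ ∈ T, u ⊆ v δ → δ ≤ β) :
    IsSparseFamily X κ d (Cardinal.lift.{u + 1} lam) (v '' T) := by
  have hv' : ∀ w ∈ v '' T, w ⊆ X ∧ #w = d := by
    rintro _ ⟨δ, hδ, rfl⟩
    exact hv δ hδ
  refine ⟨hv', le_antisymm ?_ ?_, fun u hu huκ => ?_⟩
  · calc #(v '' T) ≤ #T := mk_image_le
      _ ≤ #(Iio lam.ord) := mk_le_mk_of_subset hT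
      _ = Cardinal.lift.{u + 1} lam := by rw [Cardinal.mk_Iio_ordinal, card_ord]
  · by_contra! hsmall
    choose p hpw hpκ using fun w : ↥(v '' T) =>
      le_mk_iff_exists_subset.1 ((hv' w.1 w.2).2 ▸ hκd)
    choose β hβ hβT using fun w : ↥(v '' T) => hbdd (p w) ((hpw w).trans (hv' w.1 w.2).1) (hpκ w)
    have hsup : ⨆ w, β w < lam.ord := by
      refine lift_iSup_lt_of_lt_cof ?_ hβ
      rwa [hlreg.lift_cof_ord, Cardinal.lift_id'.{u, u + 1}]
    obtain ⟨δ, hδT, hδ⟩ := hT_unbdd _ hsup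
    have hδβ := hβT ⟨v δ, δ, hδT, rfl⟩ δ hδT (hpw _)
    have hβbdd : BddAbove (range β) := ⟨lam.ord, forall_mem_range.2 fun w => (hβ w).le⟩
    exact hδ.not_ge (hδβ.trans (le_ciSup hβbdd _))
  · obtain ⟨β, hβ, hβT⟩ := hbdd u hu huκ
    calc #{w | w ∈ v '' T ∧ u ⊆ w} ≤ #(v '' Iic β) := by
          refine mk_le_mk_of_subset ?_
          rintro _ ⟨⟨δ, hδ, rfl⟩, huδ⟩
          exact ⟨δ, hβT δ hδ huδ, rfl⟩
      _ ≤ #(Iic β) := mk_image_le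
      _ < Cardinal.lift.{u + 1} lam := mk_Iic_lt_lift_of_lt_ord hlreg.aleph0_le hβ

theorem stmt11_general (κ θ lam : Cardinal.{u})
    (hθl : θ < lam)
    (hθreg : θ.IsRegular) (hlreg : lam.IsRegular)
    (S : Set Ordinal.{u}) (hS : IsStationaryIn S lam.ord)
    (C : Ordinal.{u} → Set Ordinal.{u})
    (hCsub : ∀ δ ∈ S, C δ ⊆ Set.Iio δ)
    (hCotp : ∀ δ ∈ S, Ordinal.type ((· < ·) : ↥(C δ) → ↥(C δ) → Prop) = Ordinal.lift.{u+1} θ.ord)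
    (hbdd : ∀ u : Set Ordinal.{u}, u ⊆ Set.Iio lam.ord → #u = Cardinal.lift.{u+1} κ →
      ∃ β < lam.ord, ∀ δ ∈ S, u ⊆ C δ → δ ≤ β) :
    ∀ d : Cardinal.{u}, κ ≤ d → d < θ →
      ∃ μ < lam, ∃ 𝒜 : Set (Set Ordinal.{u}),
        (∀ v ∈ 𝒜, v ⊆ Set.Iio μ.ord ∧ #v = Cardinal.lift.{u+1} d) ∧ #𝒜 = Cardinal.lift.{u+1} lam ∧
        ∀ u : Set Ordinal.{u}, u ⊆ Set.Iio μ.ord → #u = Cardinal.lift.{u+1} κ →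
          #{v | v ∈ 𝒜 ∧ u ⊆ v} < Cardinal.lift.{u+1} lam := by
  intro d hκd hdθ
  choose! x hxC hxd using fun δ hδ => exists_mem_mk_inter_Iio_eq (C := C δ) (d := d)
    (by rw [hCotp δ hδ, Ordinal.lift_lt, ord_lt_ord]; exact hdθ)
  obtain ⟨γ, hγ⟩ := hS.exists_unbounded_fiber hlreg (hθreg.aleph0_le.trans_lt hθl)
    fun δ hδ => hCsub δ hδ (hxC δ hδ)
  obtain ⟨δ₀, hδ₀S, hδ₀γ, -⟩ := hγ 0 hlreg.ord_pos
  have hγlam : γ < lam.ord := hδ₀γ ▸ (hCsub δ₀ hδ₀S (hxC δ₀ hδ₀S)).trans (hS.1 hδ₀S)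
  have hfamily : IsSparseFamily (Iio γ) (Cardinal.lift.{u + 1} κ) (Cardinal.lift.{u + 1} d)
      (Cardinal.lift.{u + 1} lam) ((fun δ => C δ ∩ Iio (x δ)) '' {δ ∈ S | x δ = γ}) := by
    refine isSparseFamily_image_of_bounded hlreg (Cardinal.lift_le.2 hκd) (fun δ hδ => hS.1 hδ.1)
      (fun β hβ => ?_) (fun δ hδ => ⟨hδ.2 ▸ inter_subset_right, hxd δ hδ.1⟩) fun u hu huκ => ?_
    · obtain ⟨δ, hδS, hδγ, hβδ⟩ := hγ β hβ
      exact ⟨δ, ⟨hδS, hδγ⟩, hβδ⟩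
    · obtain ⟨β, hβ, hβS⟩ := hbdd u (hu.trans (Iio_subset_Iio hγlam.le)) huκ
      exact ⟨β, hβ, fun δ hδ huδ => hβS δ hδ.1 (huδ.trans inter_subset_left)⟩
  obtain ⟨𝒜, h𝒜⟩ := hfamily.exists_Iio_card_ord
  exact ⟨γ.card, lt_ord.1 hγlam, 𝒜, h𝒜⟩

theorem stmt11 (κ θ lam : Cardinal.{u})
    (hκ : ℵ₀ ≤ κ) (hκθ : κ < θ) (hθl : θ < lam)
    (hθreg : θ.IsRegular) (hlreg : lam.IsRegular)
    (S : Set Ordinal.{u}) (hS : IsStationaryIn S lam.ord)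
    (hScof : ∀ δ ∈ S, δ.cof = θ)
    (C : Ordinal.{u} → Set Ordinal.{u})
    (hCsub : ∀ δ ∈ S, C δ ⊆ Set.Iio δ)
    (hCotp : ∀ δ ∈ S, Ordinal.type ((· < ·) : ↥(C δ) → ↥(C δ) → Prop) = Ordinal.lift.{u+1} θ.ord)
    (hbdd : ∀ u : Set Ordinal.{u}, u ⊆ Set.Iio lam.ord → #u = Cardinal.lift.{u+1} κ →
      ∃ β < lam.ord, ∀ δ ∈ S, u ⊆ C δ → δ ≤ β) :
    ∀ d : Cardinal.{u}, κ ≤ d → d < θ →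
      ∃ μ < lam, ∃ 𝒜 : Set (Set Ordinal.{u}),
        (∀ v ∈ 𝒜, v ⊆ Set.Iio μ.ord ∧ #v = Cardinal.lift.{u+1} d) ∧ #𝒜 = Cardinal.lift.{u+1} lam ∧
        ∀ u : Set Ordinal.{u}, u ⊆ Set.Iio μ.ord → #u = Cardinal.lift.{u+1} κ →
          #{v | v ∈ 𝒜 ∧ u ⊆ v} < Cardinal.lift.{u+1} lam :=
  stmt11_general κ θ lam hθl hθreg hlreg S hS C hCsub hCotp hbdd
end

section
/- Let κ < θ < λ be infinite cardinals with λ regular, and assume ∂^κ < λ for all ∂ < θ. Suppose for some μ < λ and some ∂ ∈ [κ, θ) there is a family A ⊆ [μ]^∂ of cardinality λ such that every u ∈ [μ]^κ is contained in fewer than λ members of A. Then there is a family A' ⊆ [μ]^∂ of cardinality λ which is a κ-family, i.e., |u ∩ v| < κ for all distinct u, v ∈ A'. -/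
/-!
Take a maximal subfamily of `𝒜` whose members pairwise meet in fewer than `κ` points. A member
`B` meeting a fixed `A ∈ 𝒜` in at least `κ` points contains one of the at most `d ^ κ < λ`
subsets of `A` of size `κ`, each of which lies in fewer than `λ` members of `𝒜`; so by regularity
each `A` is "bad" for fewer than `λ` members. If the maximal subfamily had fewer than `λ` members,
again by regularity some member of `𝒜` would be neither in it nor bad for it, and could be added.
-/

open Cardinal

universe u

theorem Set.exists_maximal_pairwise_subset {β : Type*} (S : Set β) (r : β → β → Prop) :
    ∃ T, Maximal (fun T => T ⊆ S ∧ T.Pairwise r) T :=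
  zorn_subset _ fun c hcS hc => ⟨⋃₀ c, ⟨Set.sUnion_subset fun _ ht => (hcS ht).1,
    hc.pairwise_sUnion.2 fun _ ht => (hcS ht).2⟩, fun _ => Set.subset_sUnion_of_mem⟩

theorem Cardinal.exists_subset_pairwise_not_of_mk_lt {β : Type u} {lam : Cardinal.{u}}
    (hlam : lam.IsRegular) {S : Set β} (hS : #S = lam) {R : β → β → Prop}
    (hR : ∀ x y, R x y → R y x) (hfew : ∀ x ∈ S, #{y ∈ S | R x y} < lam) :
    ∃ T ⊆ S, #T = lam ∧ T.Pairwise fun x y => ¬ R x y := by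
  obtain ⟨T, ⟨hTS, hT⟩, hmax⟩ := S.exists_maximal_pairwise_subset fun x y => ¬ R x y
  refine ⟨T, hTS, (hS ▸ mk_le_mk_of_subset hTS).antisymm (not_lt.1 fun hlt => ?_), hT⟩
  set U := ⋃ x ∈ T, {y ∈ S | R x y}
  have hU : #(T ∪ U : Set β) < lam :=
    (mk_union_le _ _).trans_lt <| add_lt_of_lt hlam.aleph0_le hlt <|
      (card_biUnion_lt_iff_forall_of_isRegular hlam hlt).2 fun x hx => hfew x (hTS hx)
  obtain ⟨y, hyS, hyTU⟩ : (S \ (T ∪ U)).Nonempty :=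
    Set.sdiff_nonempty.2 fun hsub => (hS ▸ mk_le_mk_of_subset hsub).not_gt hU
  have hRy : ∀ x ∈ T, ¬ R x y := fun x hx hxy =>
    hyTU (Or.inr (Set.mem_biUnion hx ⟨hyS, hxy⟩))
  have hins : insert y T ⊆ S ∧ (insert y T).Pairwise fun x y => ¬ R x y :=
    ⟨Set.insert_subset hyS hTS, hT.insert fun x hx _ => ⟨fun h => hRy x hx (hR _ _ h), hRy x hx⟩⟩
  exact hyTU (Or.inl (hmax hins (Set.subset_insert y T) (Set.mem_insert y T)))

theorem Cardinal.mk_setOf_le_mk_inter_lt {α : Type u} {κ lam : Cardinal.{u}} (hlam : lam.IsRegular)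
    {𝒜 : Set (Set α)} {A : Set α} (hA : max #A ℵ₀ ^ κ < lam)
    (hfew : ∀ u : Set α, #u = κ → #{v | v ∈ 𝒜 ∧ u ⊆ v} < lam) :
    #{B ∈ 𝒜 | κ ≤ #(A ∩ B : Set α)} < lam := by
  set T : Set (Set α) := {u | u ⊆ A ∧ #u = κ}
  have hT : #T < lam :=
    (mk_le_mk_of_subset (t := {u | u ⊆ A ∧ #u ≤ κ}) fun _ hu => ⟨hu.1, hu.2.le⟩).trans_lt <|
      (mk_bounded_subset_le A κ).trans_lt hA
  have hsub : {B ∈ 𝒜 | κ ≤ #(A ∩ B : Set α)} ⊆ ⋃ u ∈ T, {v | v ∈ 𝒜 ∧ u ⊆ v} := by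
    rintro B ⟨hB, hκB⟩
    obtain ⟨u, hu, huκ⟩ := le_mk_iff_exists_subset.1 hκB
    exact Set.mem_biUnion (show u ∈ T from ⟨hu.trans Set.inter_subset_left, huκ⟩)
      ⟨hB, hu.trans Set.inter_subset_right⟩
  exact (mk_le_mk_of_subset hsub).trans_lt <|
    (card_biUnion_lt_iff_forall_of_isRegular hlam hT).2 fun u hu => hfew u hu.2

theorem stmt12_general {α : Type u} (κ θ lam d : Cardinal.{u})
    (hκ : ℵ₀ ≤ κ) (hlreg : lam.IsRegular)
    (hpow : ∀ c < θ, c ^ κ < lam)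
    (hd1 : κ ≤ d) (hd2 : d < θ)
    (𝒜 : Set (Set α)) (hsize : ∀ A ∈ 𝒜, #A = d) (hcard : #𝒜 = lam)
    (hfew : ∀ u : Set α, #u = κ → #{v | v ∈ 𝒜 ∧ u ⊆ v} < lam) :
    ∃ 𝒜' : Set (Set α), (∀ A ∈ 𝒜', #A = d) ∧ #𝒜' = lam ∧ KappaFamily κ 𝒜' := by
  have hsymm (A B : Set α) (h : κ ≤ #(A ∩ B : Set α)) : κ ≤ #(B ∩ A : Set α) :=
    Set.inter_comm A B ▸ h
  have hlarge (A) (hA : A ∈ 𝒜) : #{B ∈ 𝒜 | κ ≤ #(A ∩ B : Set α)} < lam := by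
    refine mk_setOf_le_mk_inter_lt hlreg ?_ hfew
    rw [hsize A hA, max_eq_left (hκ.trans hd1)]
    exact hpow d hd2
  obtain ⟨𝒜', h𝒜', hcard', hpair⟩ := exists_subset_pairwise_not_of_mk_lt hlreg hcard hsymm hlarge
  exact ⟨𝒜', fun A hA => hsize A (h𝒜' hA), hcard', fun A hA B hB hAB => not_le.1 (hpair hA hB hAB)⟩

theorem stmt12 {α : Type u} (κ θ lam μ d : Cardinal.{u})
    (hκ : ℵ₀ ≤ κ) (hκθ : κ < θ) (hθl : θ < lam) (hlreg : lam.IsRegular)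
    (hpow : ∀ c < θ, c ^ κ < lam)
    (hμ : μ < lam) (hα : #α = μ) (hd1 : κ ≤ d) (hd2 : d < θ)
    (𝒜 : Set (Set α)) (hsize : ∀ A ∈ 𝒜, #A = d) (hcard : #𝒜 = lam)
    (hfew : ∀ u : Set α, #u = κ → #{v | v ∈ 𝒜 ∧ u ⊆ v} < lam) :
    ∃ 𝒜' : Set (Set α), (∀ A ∈ 𝒜', #A = d) ∧ #𝒜' = lam ∧ KappaFamily κ 𝒜' :=
  stmt12_general κ θ lam d hκ hlreg hpow hd1 hd2 𝒜 hsize hcard hfew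
end

section
/- Suppose λ is the minimal cardinal such that there exists a graph with λ vertices, coloring number > θ, and list-chromatic number ≤ κ, where 2^κ ≤ θ ≤ λ and θ is regular. Then there exists a graph G with λ vertices such that: G has coloring number ≥ θ, every subgraph of G with fewer than λ vertices has coloring number ≤ θ, and the complete bipartite graph K(κ, 2^κ) does not weakly embed into G (i.e., there are no disjoint vertex sets X, Y in G with |X| = κ, |Y| = 2^κ, and every vertex of X adjacent to every vertex of Y). -/
/-! The witness `G` of size `lam` already works. Its coloring number exceeds `θ`; a subgraph on
fewer than `lam` vertices is still `κ`-choosable, so by minimality of `lam` its coloring number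
is at most `θ`. Finally `K(κ, 2^κ)` is not `κ`-choosable: color with pairs from `X × X`, give
`x ∈ X` the list `{x} × X` and give the vertex of `Y` indexed by `g : X → X` the graph of `g`.
A coloring picks some `g` on `X`, and then the vertex indexed by `g` clashes with one of its
neighbours in `X`. -/

open Cardinal

universe u

/-- The coloring number of `G` is at most `ν`: some well-ordering of the vertices
has every vertex with fewer than `ν` earlier neighbors. -/
def ColAtMost {V : Type u} (G : SimpleGraph V) (ν : Cardinal.{u}) : Prop :=
  ∃ (r : V → V → Prop) (_ : IsWellOrder V r), ∀ v, #{u | G.Adj u v ∧ r u v} < ν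

/-- The list-chromatic number of `G` is at most `ν`: any lists of size ≥ ν admit
a proper coloring from the lists. -/
def ListChromAtMost {V : Type u} (G : SimpleGraph V) (ν : Cardinal.{u}) : Prop :=
  ∀ (C : Type u) (L : V → Set C), (∀ v, ν ≤ #(L v)) →
    ∃ c : V → C, (∀ v, c v ∈ L v) ∧ ∀ u v, G.Adj u v → c u ≠ c v

variable {V W : Type u}

theorem ColAtMost.mono {G : SimpleGraph V} {ν ν' : Cardinal.{u}} (h : ColAtMost G ν)
    (hνν' : ν ≤ ν') : ColAtMost G ν' :=
  let ⟨r, wo, hr⟩ := h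
  ⟨r, wo, fun v => (hr v).trans_le hνν'⟩

theorem ListChromAtMost.comap {H : SimpleGraph W} {G : SimpleGraph V} {ν : Cardinal.{u}}
    (hG : ListChromAtMost G ν) (f : H →g G) (hf : Function.Injective f) :
    ListChromAtMost H ν := by
  intro C L hL
  rcases isEmpty_or_nonempty W with _ | ⟨⟨w₀⟩⟩
  · exact ⟨isEmptyElim, isEmptyElim, fun u => isEmptyElim u⟩
  -- vertices outside the image of `f` get the whole palette, which is as large as any list
  have hC : ν ≤ #C := (hL w₀).trans (mk_set_le _)
  obtain ⟨c, hcL, hcG⟩ := hG C (Function.extend f L fun _ => Set.univ) fun v => by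
    by_cases hv : ∃ w, f w = v
    · obtain ⟨w, rfl⟩ := hv
      simpa only [hf.extend_apply] using hL w
    · simpa only [Function.extend_apply' _ _ _ hv, mk_univ] using hC
  refine ⟨c ∘ f, fun w => ?_, fun u w huw => hcG _ _ (f.map_adj huw)⟩
  simpa only [Function.comp_apply, hf.extend_apply] using hcL (f w)

theorem not_listChromAtMost_completeBipartiteGraph {α β : Type u} (hβ : #(α → α) ≤ #β) :
    ¬ ListChromAtMost (completeBipartiteGraph α β) #α := by
  intro hlist
  obtain ⟨e⟩ := hβ
  let L : α ⊕ β → Set (α × α) := Sum.elim (fun x => {p | p.1 = x})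
    (Function.extend e (fun g => Set.range fun x => (x, g x)) fun _ => Set.univ)
  have hL : ∀ v, #α ≤ #(L v)
    | .inl x => mk_le_of_injective (f := fun t : α => (⟨(x, t), rfl⟩ : {p : α × α | p.1 = x}))
        fun _ _ h => congrArg (fun p => p.1.2) h
    | .inr y => by
      by_cases hy : ∃ g, e g = y
      · obtain ⟨g, rfl⟩ := hy
        simp only [L, Sum.elim_inr, e.injective.extend_apply]
        exact (mk_range_eq _ fun _ _ h => congrArg Prod.fst h).ge
      · simp only [L, Sum.elim_inr, Function.extend_apply' _ _ _ hy, mk_univ]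
        exact mk_le_of_injective (f := fun x : α => (x, x)) fun _ _ h => congrArg Prod.fst h
  obtain ⟨c, hcL, hc⟩ := hlist (α × α) L hL
  let g : α → α := fun x => (c (.inl x)).2
  have hcx : ∀ x, c (.inl x) = (x, g x) := fun x => Prod.ext (hcL (.inl x)) rfl
  have hcy : c (.inr (e g)) ∈ Set.range fun x => (x, g x) := by
    simpa only [L, Sum.elim_inr, e.injective.extend_apply] using hcL (.inr (e g))
  obtain ⟨x, hx⟩ := hcy
  exact hc (.inl x) (.inr (e g)) (by simp) (hcx x ▸ hx)

def SimpleGraph.completeBipartiteHom (G : SimpleGraph V) (X Y : Set V)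
    (hadj : ∀ x ∈ X, ∀ y ∈ Y, G.Adj x y) : completeBipartiteGraph X Y →g G where
  toFun := Sum.elim (↑) (↑)
  map_rel' := by
    rintro (x | y) (x' | y') h <;> simp at h
    · exact hadj x x.2 y' y'.2
    · exact (hadj x' x'.2 y y.2).symm

theorem ListChromAtMost.not_completeBipartite {G : SimpleGraph V} {κ : Cardinal.{u}}
    (hG : ListChromAtMost G κ) (hκ : ℵ₀ ≤ κ) :
    ¬ ∃ (X Y : Set V), Disjoint X Y ∧ #X = κ ∧ #Y = 2 ^ κ ∧
      ∀ x ∈ X, ∀ y ∈ Y, G.Adj x y := by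
  rintro ⟨X, Y, hXY, hX, hY, hadj⟩
  have hXY_card : #(X → X) ≤ #Y := by
    rw [hY, ← power_def, hX, power_self_eq hκ]
  have hinj : Function.Injective (G.completeBipartiteHom X Y hadj) :=
    Subtype.val_injective.sumElim Subtype.val_injective
      fun x y h => hXY.ne_of_mem x.2 y.2 h
  exact not_listChromAtMost_completeBipartiteGraph hXY_card
    (hX ▸ hG.comap _ hinj)

theorem stmt13_general (κ θ lam : Cardinal.{u})
    (hκ : ℵ₀ ≤ κ)
    (hex : ∃ (V : Type u) (G : SimpleGraph V), #V = lam ∧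
      ¬ ColAtMost G θ ∧ ListChromAtMost G κ)
    (hmin : ∀ lam' < lam, ¬ ∃ (V : Type u) (G : SimpleGraph V), #V = lam' ∧
      ¬ ColAtMost G θ ∧ ListChromAtMost G κ) :
    ∃ (V : Type u) (G : SimpleGraph V), #V = lam ∧
      (∀ ν : Cardinal.{u}, ν < θ → ¬ ColAtMost G ν) ∧
      (∀ W : Set V, #W < lam → ColAtMost (G.induce W) θ) ∧
      ¬ ∃ (X Y : Set V), Disjoint X Y ∧ #X = κ ∧ #Y = 2 ^ κ ∧
          ∀ x ∈ X, ∀ y ∈ Y, G.Adj x y := by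
  obtain ⟨V, G, hV, hncol, hlist⟩ := hex
  refine ⟨V, G, hV, fun ν hν hcol => hncol (hcol.mono hν.le), fun W hW => ?_,
    hlist.not_completeBipartite hκ⟩
  by_contra hcol
  have hinduce : G.induce W ↪g G := SimpleGraph.Embedding.induce W
  exact hmin _ hW ⟨W, G.induce W, rfl, hcol, hlist.comap hinduce.toHom hinduce.injective⟩

theorem stmt13 (κ θ lam : Cardinal.{u})
    (hκ : ℵ₀ ≤ κ) (h2κ : 2 ^ κ ≤ θ) (hθl : θ ≤ lam) (hθreg : θ.IsRegular)
    (hex : ∃ (V : Type u) (G : SimpleGraph V), #V = lam ∧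
      ¬ ColAtMost G θ ∧ ListChromAtMost G κ)
    (hmin : ∀ lam' < lam, ¬ ∃ (V : Type u) (G : SimpleGraph V), #V = lam' ∧
      ¬ ColAtMost G θ ∧ ListChromAtMost G κ) :
    ∃ (V : Type u) (G : SimpleGraph V), #V = lam ∧
      (∀ ν : Cardinal.{u}, ν < θ → ¬ ColAtMost G ν) ∧
      (∀ W : Set V, #W < lam → ColAtMost (G.induce W) θ) ∧
      ¬ ∃ (X Y : Set V), Disjoint X Y ∧ #X = κ ∧ #Y = 2 ^ κ ∧
          ∀ x ∈ X, ∀ y ∈ Y, G.Adj x y :=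
  stmt13_general κ θ lam hκ hex hmin
end

section
/- Suppose κ ≤ μ < χ < λ with λ regular, χ a limit cardinal of cofinality different from cf(μ), and there exists a κ-family A ⊆ [χ]^μ of cardinality λ. Then for every sufficiently large cardinal χ₁ < χ there exists a κ-family A' ⊆ [χ₁]^μ of cardinality λ. -/
open Cardinal

universe u

/-!
Enumerate `α` in order type `χ`. Every `A ∈ 𝒜` meets some proper initial segment in `μ` points:
otherwise the sizes of the traces of `A` on initial segments increase below `μ`; if `μ < cf χ`
then all of `A` lies below a single point, and if `cf χ < μ` these sizes are cofinal in `μ`,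
which forces `cf χ = cf μ`. As `χ < λ` with `λ` regular, `λ` members of `𝒜` share one such
segment `I`. Every `S ⊇ I` of size `χ₁ ≥ |I| + μ` then carries the traces `A ∩ S`: they have size
`μ ≥ κ`, so distinct members of the family have distinct traces, and these form a `κ`-family.
-/

open Set Function

namespace KappaFamily

variable {α β : Type u} {κ : Cardinal.{u}} {𝒜 : Set (Set α)}

theorem mono_s16 (h : KappaFamily κ 𝒜) {ℬ : Set (Set α)} (hℬ : ℬ ⊆ 𝒜) : KappaFamily κ ℬ :=
  fun A hA B hB => h A (hℬ hA) B (hℬ hB)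

theorem image_preimage {f : β → α} (hf : Injective f) (h : KappaFamily κ 𝒜) :
    KappaFamily κ ((f ⁻¹' ·) '' 𝒜) := by
  rintro _ ⟨A, hA, rfl⟩ _ ⟨B, hB, rfl⟩ hAB
  rw [← preimage_inter]
  exact (mk_preimage_of_injective _ _ hf).trans_lt (h A hA B hB fun h => hAB (h ▸ rfl))

theorem injOn_inter (h : KappaFamily κ 𝒜) {S : Set α} (hS : ∀ A ∈ 𝒜, κ ≤ #(A ∩ S : Set α)) :
    InjOn (· ∩ S) 𝒜 := by
  intro A hA B hB (hAB : A ∩ S = B ∩ S)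
  by_contra hne
  refine (h A hA B hB hne).not_ge ((hS A hA).trans (mk_le_mk_of_subset fun x hx => ?_))
  exact ⟨hx.1, (show x ∈ B ∩ S from hAB ▸ hx).1⟩

theorem exists_restrict (h : KappaFamily κ 𝒜) {μ : Cardinal.{u}} (hκμ : κ ≤ μ) (S : Set α)
    (hS : ∀ A ∈ 𝒜, #(A ∩ S : Set α) = μ) :
    ∃ 𝒜' : Set (Set S), (∀ A ∈ 𝒜', #A = μ) ∧ KappaFamily κ 𝒜' ∧ #𝒜' = #𝒜 := by
  refine ⟨(Subtype.val ⁻¹' ·) '' 𝒜, ?_, h.image_preimage Subtype.val_injective,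
    mk_image_eq_of_injOn _ _ fun A hA B hB hAB => ?_⟩
  · rintro _ ⟨A, hA, rfl⟩
    rw [← mk_image_eq Subtype.val_injective, Subtype.image_preimage_coe, inter_comm, hS A hA]
  · exact h.injOn_inter (fun A hA => hκμ.trans (hS A hA).ge) hA hB
      (by simpa only [inter_comm S] using Subtype.preimage_coe_eq_preimage_coe_iff.1 hAB)

end KappaFamily

theorem Cardinal.exists_superset_mk_eq {α : Type u} {T : Set α} {c : Cardinal.{u}} (hc : ℵ₀ ≤ c)
    (hT : #T ≤ c) (hcα : c ≤ #α) : ∃ S, T ⊆ S ∧ #S = c := by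
  obtain ⟨U, hU⟩ := le_mk_iff_exists_set.1 hcα
  refine ⟨T ∪ U, subset_union_left, le_antisymm ?_ (hU ▸ mk_le_mk_of_subset subset_union_right)⟩
  calc #(T ∪ U : Set α) ≤ #T + #U := mk_union_le _ _
    _ ≤ c + c := add_le_add hT hU.le
    _ = c := add_eq_self hc

section LinearOrder

variable {L M : Type u} [LinearOrder L] [LinearOrder M]

theorem Monotone.cof_eq_of_isCofinal_range [NoMaxOrder M] {f : L → M} (hf : Monotone f)
    (hf' : IsCofinal (range f)) : Order.cof L = Order.cof M := by
  apply le_antisymm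
  · obtain ⟨t, ht, htc⟩ := Order.exists_cof_eq M
    have (y : t) : ∃ x, (y : M) < f x := by
      obtain ⟨z, hz⟩ := exists_gt (y : M)
      obtain ⟨_, ⟨x, rfl⟩, hx⟩ := hf' z
      exact ⟨x, hz.trans_le hx⟩
    choose g hg using this
    refine (Order.cof_le (s := range g) fun a => ?_).trans (mk_range_le.trans htc.le)
    obtain ⟨y, hy, hay⟩ := ht (f a)
    exact ⟨g ⟨y, hy⟩, mem_range_self _, (hf.reflect_lt (hay.trans_lt (hg ⟨y, hy⟩))).le⟩
  · obtain ⟨s, hs, hsc⟩ := Order.exists_cof_eq L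
    exact (Order.cof_le (hs.image hf hf')).trans (mk_image_le.trans hsc.le)

theorem Order.cof_eq_cof_ord_of_monotone {h : L → Cardinal.{u}} {μ : Cardinal.{u}} (hμ : ℵ₀ ≤ μ)
    (hh : Monotone h) (hlt : ∀ x, h x < μ) (hsup : ∀ ν < μ, ∃ x, ν < h x) :
    Order.cof L = μ.ord.cof := by
  have := Cardinal.noMaxOrder hμ
  rw [← Ordinal.cof_toType]
  refine Monotone.cof_eq_of_isCofinal_range
    (f := fun x => Ordinal.ToType.mk ⟨(h x).ord, ord_lt_ord.2 (hlt x)⟩)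
    (fun x y hxy => Ordinal.ToType.mk.monotone (ord_le_ord.2 (hh hxy))) fun y => ?_
  obtain ⟨x, hx⟩ := hsup (y.toOrd : Ordinal).card (lt_ord.1 y.toOrd.2)
  refine ⟨_, mem_range_self x, ?_⟩
  rw [← Ordinal.ToType.mk.symm_apply_le]
  exact (lt_ord.2 hx).le

theorem mk_le_cof_mul_iSup [NoMaxOrder L] {β : Type u} (f : β → L) (A : Set β) :
    #A ≤ Order.cof L * ⨆ x, #(A ∩ f ⁻¹' Iio x : Set β) := by
  obtain ⟨s, hs, hsc⟩ := Order.exists_cof_eq L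
  have hA : A ⊆ ⋃ x ∈ s, A ∩ f ⁻¹' Iio x := by
    intro a ha
    obtain ⟨y, hy⟩ := exists_gt (f a)
    obtain ⟨x, hx, hyx⟩ := hs y
    exact mem_biUnion hx ⟨ha, hy.trans_le hyx⟩
  calc #A ≤ #(⋃ x ∈ s, A ∩ f ⁻¹' Iio x) := mk_le_mk_of_subset hA
    _ ≤ #s * ⨆ x : s, #(A ∩ f ⁻¹' Iio x.1 : Set β) := mk_biUnion_le _ _
    _ ≤ _ := by
      rw [hsc]
      gcongr
      exact ciSup_le' fun x => le_ciSup bddAbove_of_small x.1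

theorem exists_mk_inter_preimage_Iio_eq [WellFoundedLT L] [NoMaxOrder L] {β : Type u} (f : β → L)
    {A : Set β}
    (hcof : Order.cof L ≠ (#A).ord.cof) : ∃ x, #(A ∩ f ⁻¹' Iio x : Set β) = #A := by
  by_contra! hne
  have hlt x : #(A ∩ f ⁻¹' Iio x : Set β) < #A :=
    (mk_le_mk_of_subset inter_subset_left).lt_of_ne (hne x)
  rcases lt_trichotomy (#A) (Order.cof L) with hA | hA | hA
  · obtain ⟨x, hx⟩ :=
      not_isCofinal_iff.1 fun hc => (Order.cof_le hc).not_gt (mk_image_le.trans_lt hA)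
    have hAx : A ⊆ f ⁻¹' Iio x := fun a ha => hx _ (mem_image_of_mem f ha)
    exact hne x (by rw [inter_eq_left.2 hAx])
  · exact hcof (by rw [hA, Order.cof_ord_cof])
  · have : Nonempty L := by
      obtain ⟨a, -⟩ := mk_ne_zero_iff.1 (pos_of_gt hA).ne'
      exact ⟨f a⟩
    have hμ : ℵ₀ ≤ #A := Order.aleph0_le_cof.trans hA.le
    refine hcof (Order.cof_eq_cof_ord_of_monotone hμ (fun x y hxy => ?_) hlt fun ν hν => ?_)
    · exact mk_le_mk_of_subset (inter_subset_inter_right _ (preimage_mono (Iio_subset_Iio hxy)))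
    · by_contra! hle
      refine (mul_lt_of_lt hμ hA hν).not_ge ?_
      calc #A ≤ Order.cof L * ⨆ x, #(A ∩ f ⁻¹' Iio x : Set β) := mk_le_cof_mul_iSup f A
        _ ≤ Order.cof L * ν := by gcongr; exact ciSup_le' hle

end LinearOrder

theorem stmt16_general {α : Type u} (κ μ χ lam : Cardinal.{u})
    (hκ : ℵ₀ ≤ κ) (hκμ : κ ≤ μ) (hμχ : μ < χ) (hχl : χ < lam)
    (hlreg : lam.IsRegular) (hcof : χ.ord.cof ≠ μ.ord.cof)
    (hα : #α = χ)
    (𝒜 : Set (Set α)) (hsize : ∀ A ∈ 𝒜, #A = μ) (hfam : KappaFamily κ 𝒜)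
    (hcard : #𝒜 = lam) :
    ∃ χ₀ < χ, ∀ χ₁ : Cardinal.{u}, χ₀ ≤ χ₁ → χ₁ < χ →
      ∃ (β : Type u), #β = χ₁ ∧ ∃ 𝒜' : Set (Set β),
        (∀ A ∈ 𝒜', #A = μ) ∧ KappaFamily κ 𝒜' ∧ #𝒜' = lam := by
  have hμ : ℵ₀ ≤ μ := hκ.trans hκμ
  have := Cardinal.noMaxOrder (hμ.trans hμχ.le)
  obtain ⟨e⟩ : Nonempty (α ≃ χ.ord.ToType) := Cardinal.eq.1 (by simp [hα])
  have hsegment (A : 𝒜) : ∃ x, #(A ∩ e ⁻¹' Iio x : Set α) = μ := by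
    rw [← hsize A A.2]
    exact exists_mk_inter_preimage_Iio_eq e (by rwa [Ordinal.cof_toType, hsize A A.2])
  choose x hx using hsegment
  obtain ⟨x₀, ℬ, hℬ𝒜, hℬ, hℬx₀⟩ := infinite_pigeonhole_set x lam hcard.ge hlreg.aleph0_le
    (by rwa [hlreg.cof_ord, mk_ord_toType])
  have hx₀ : #(e ⁻¹' Iio x₀) < χ := by
    simpa [mk_preimage_equiv] using mk_Iio_lt x₀ (by simp)
  refine ⟨max #(e ⁻¹' Iio x₀) μ, max_lt hx₀ hμχ, fun χ₁ hχ₁ hχ₁χ => ?_⟩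
  obtain ⟨S, hxS, hS⟩ := exists_superset_mk_eq (hμ.trans (le_of_max_le_right hχ₁))
    (le_of_max_le_left hχ₁) (hα ▸ hχ₁χ.le)
  refine ⟨S, hS, ?_⟩
  rw [← le_antisymm ((mk_le_mk_of_subset hℬ𝒜).trans hcard.le) hℬ]
  refine (hfam.mono_s16 hℬ𝒜).exists_restrict hκμ S fun A hA => le_antisymm ?_ ?_
  · exact (mk_le_mk_of_subset inter_subset_left).trans (hsize A (hℬ𝒜 hA)).le
  · rw [← hx ⟨A, hℬ𝒜 hA⟩, hℬx₀ hA]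
    exact mk_le_mk_of_subset (inter_subset_inter_right _ hxS)

theorem stmt16 {α : Type u} (κ μ χ lam : Cardinal.{u})
    (hκ : ℵ₀ ≤ κ) (hκμ : κ ≤ μ) (hμχ : μ < χ) (hχl : χ < lam)
    (hlreg : lam.IsRegular) (hχlim : Order.IsSuccLimit χ) (hcof : χ.ord.cof ≠ μ.ord.cof)
    (hα : #α = χ)
    (𝒜 : Set (Set α)) (hsize : ∀ A ∈ 𝒜, #A = μ) (hfam : KappaFamily κ 𝒜)
    (hcard : #𝒜 = lam) :
    ∃ χ₀ < χ, ∀ χ₁ : Cardinal.{u}, χ₀ ≤ χ₁ → χ₁ < χ →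
      ∃ (β : Type u), #β = χ₁ ∧ ∃ 𝒜' : Set (Set β),
        (∀ A ∈ 𝒜', #A = μ) ∧ KappaFamily κ 𝒜' ∧ #𝒜' = lam :=
  stmt16_general κ μ χ lam hκ hκμ hμχ hχl hlreg hcof hα 𝒜 hsize hfam hcard
end
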